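/- Let H be a real inner product space, C ⊆ H nonempty convex with diameter at most D, and F : H → ℝ differentiable with gradient ∇F satisfying F(y) ≤ F(x) + ⟪∇F(x), y − x⟫ + (L/2)·‖y − x‖² for all x, y ∈ H, where L ≥ 0. Fix γ ∈ (0,1), β with 0 ≤ β ≤ 1−γ, and η ∈ [0,1]. Let ḡ : ℕ → H be any sequence and define: x₁ ∈ C with x₀ := x₁; g₀ = 0 and, for t ≥ 1, g_t = (1−γ)·g_{t-1} + γ·ḡ_t; ĝ_t = (β/(1−γ))·g_t + (1 − β/(1−γ))·ḡ_t; u_t ∈ C with ⟪u_t, ĝ_t⟫ ≤ ⟪v, ĝ_t⟫ for all v ∈ C; and x_{t+1} = (1−η)·x_t + η·u_t. Define ζ_s := ḡ_s − ∇F(x_s) and Z_s := ∇F(x_{s-1}) − ∇F(x_s). Then for every τ ≥ 1: η·∑_{t=1}^τ 𝒢(x_t) + F(x_{τ+1}) ≤ F(x₁) + (L·τ·η²·D²)/2 + (η·D·β/γ)·‖∇F(x₁)‖ + (η·D·β/(1−γ))·∑_{t=1}^τ [ (1−γ)·‖∑_{s=1}^t (1−γ)^{t−s}·Z_s‖ +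 γ·‖∑_{s=1}^t (1−γ)^{t−s}·ζ_s‖ ] + η·D·(1 − β/(1−γ))·∑_{t=1}^τ ‖ζ_t‖, where 𝒢(x) := sup_{v ∈ C} ⟪v − x, −∇F(x)⟫. -/

import Mathlib

open scoped RealInnerProductSpace

open Finset

/-!
One Frank–Wolfe step from `x` towards an exact minimizer `u` of `⟪·, ĝ⟫` over `C` decreases `F`
by at least `η 𝒢(x)`, up to the curvature term `L η² D² / 2` and the price `η D ‖ĝ - ∇F(x)‖` of
having minimized against `ĝ` instead of `∇F(x)`; summing these steps telescopes. Since `ĝ_t` is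
a convex combination of `g_t` and `ḡ_t` with weight `β / (1 - γ)`, its error splits into the
momentum error and `ζ_t`. The momentum error `g_t - ∇F(x_t)` satisfies the linear recursion
`e_t = (1 - γ) e_{t-1} + ((1 - γ) Z_t + γ ζ_t)` with `e_0 = -∇F(x₁)`, so it is a geometrically
weighted sum of the `Z_s` and `ζ_s`, and the initial term contributes `∑_t (1 - γ)^t ≤ (1 - γ)/γ`.
-/

theorem eq_pow_smul_add_sum_of_recurrence {R M : Type*} [Semiring R] [AddCommMonoid M]
    [Module R M] {c : R} {e w : ℕ → M} (h : ∀ t, e (t + 1) = c • e t + w (t + 1)) (t : ℕ) :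
    e t = c ^ t • e 0 + ∑ s ∈ Icc 1 t, c ^ (t - s) • w s := by
  induction t with
  | zero => simp
  | succ n ih =>
    have hshift : ∑ s ∈ Icc 1 n, c ^ (n + 1 - s) • w s = c • ∑ s ∈ Icc 1 n, c ^ (n - s) • w s := by
      rw [smul_sum]
      refine sum_congr rfl fun s hs => ?_
      rw [Nat.sub_add_comm (mem_Icc.1 hs).2, pow_succ', mul_smul]
    rw [h, ih, sum_Icc_succ_top (by omega), hshift, smul_add, ← mul_smul, ← pow_succ', Nat.sub_self,
      pow_zero, one_smul, add_assoc]

theorem sum_Icc_add_le_of_forall_add_le {a b f : ℕ → ℝ}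
    (h : ∀ t, 1 ≤ t → a t + f (t + 1) ≤ f t + b t) (τ : ℕ) :
    ∑ t ∈ Icc 1 τ, a t + f (τ + 1) ≤ f 1 + ∑ t ∈ Icc 1 τ, b t := by
  induction τ with
  | zero => simp
  | succ n ih =>
    rw [sum_Icc_succ_top (by omega), sum_Icc_succ_top (by omega)]
    linarith [h (n + 1) (by omega)]

theorem sum_Icc_le_of_le_pow_mul_add {c N : ℝ} {e A : ℕ → ℝ} (hc0 : 0 ≤ c) (hc1 : c < 1)
    (hN : 0 ≤ N) (h : ∀ t, 1 ≤ t → e t ≤ c ^ t * N + A t) (τ : ℕ) :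
    ∑ t ∈ Icc 1 τ, e t ≤ c / (1 - c) * N + ∑ t ∈ Icc 1 τ, A t := by
  have hgeom : ∑ t ∈ Icc 1 τ, c ^ t ≤ c / (1 - c) := by
    simpa [← Ico_add_one_right_eq_Icc] using geom_sum_Ico_le_of_lt_one (m := 1) (n := τ + 1) hc0 hc1
  calc ∑ t ∈ Icc 1 τ, e t ≤ ∑ t ∈ Icc 1 τ, (c ^ t * N + A t) :=
        sum_le_sum fun t ht => h t (mem_Icc.1 ht).1
    _ = (∑ t ∈ Icc 1 τ, c ^ t) * N + ∑ t ∈ Icc 1 τ, A t := by rw [sum_add_distrib, sum_mul]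
    _ ≤ c / (1 - c) * N + ∑ t ∈ Icc 1 τ, A t := by gcongr

theorem norm_convex_comb_sub_le {E : Type*} [SeminormedAddCommGroup E] [NormedSpace ℝ E]
    {θ : ℝ} (h0 : 0 ≤ θ) (h1 : θ ≤ 1) (a b d : E) :
    ‖θ • a + (1 - θ) • b - d‖ ≤ θ * ‖a - d‖ + (1 - θ) * ‖b - d‖ := by
  have hsplit : θ • a + (1 - θ) • b - d = θ • (a - d) + (1 - θ) • (b - d) := by module
  calc ‖θ • a + (1 - θ) • b - d‖ ≤ ‖θ • (a - d)‖ + ‖(1 - θ) • (b - d)‖ :=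
        hsplit ▸ norm_add_le _ _
    _ = θ * ‖a - d‖ + (1 - θ) * ‖b - d‖ := by
      rw [norm_smul, norm_smul, Real.norm_of_nonneg h0, Real.norm_of_nonneg (by linarith)]

section FrankWolfe

variable {H : Type*} [NormedAddCommGroup H] [InnerProductSpace ℝ H]

noncomputable abbrev frankWolfeGap (C : Set H) (F' : H → H) (x : H) : ℝ :=
  sSup ((fun v => ⟪v - x, -F' x⟫) '' C)

theorem frankWolfeGap_le {C : Set H} {D : ℝ} (hCne : C.Nonempty)
    (hdiam : ∀ a ∈ C, ∀ b ∈ C, ‖a - b‖ ≤ D) {u ĝ : H} (hu : u ∈ C)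
    (hmin : ∀ v ∈ C, ⟪u, ĝ⟫ ≤ ⟪v, ĝ⟫) (F' : H → H) (x : H) :
    frankWolfeGap C F' x ≤ ⟪F' x, x - u⟫ + D * ‖ĝ - F' x‖ := by
  refine csSup_le (hCne.image _) ?_
  rintro _ ⟨v, hv, rfl⟩
  have hlmo : ⟪ĝ, u - v⟫ ≤ 0 := by
    rw [inner_sub_right, real_inner_comm, real_inner_comm v]
    linarith [hmin v hv]
  have herr : ⟪F' x - ĝ, u - v⟫ ≤ ‖ĝ - F' x‖ * D :=
    (real_inner_le_norm _ _).trans <| by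
      rw [norm_sub_rev]; gcongr; exact hdiam u hu v hv
  calc ⟪v - x, -F' x⟫ = ⟪F' x, x - u⟫ + ⟪ĝ, u - v⟫ + ⟪F' x - ĝ, u - v⟫ := by
        simp only [inner_sub_left, inner_sub_right, inner_neg_right, real_inner_comm]; ring
    _ ≤ ⟪F' x, x - u⟫ + D * ‖ĝ - F' x‖ := by linarith

theorem le_of_smooth_convex_comb {F : H → ℝ} {F' : H → H} {L D η : ℝ} (hL : 0 ≤ L)
    (hη : 0 ≤ η) {x u : H}
    (hsmooth : F ((1 - η) • x + η • u) ≤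
      F x + ⟪F' x, (1 - η) • x + η • u - x⟫ + L / 2 * ‖(1 - η) • x + η • u - x‖ ^ 2)
    (hux : ‖u - x‖ ≤ D) :
    F ((1 - η) • x + η • u) ≤ F x - η * ⟪F' x, x - u⟫ + L * η ^ 2 * D ^ 2 / 2 := by
  have hstep : (1 - η) • x + η • u - x = η • (u - x) := by module
  have hflip : ⟪F' x, u - x⟫ = -⟪F' x, x - u⟫ := by rw [← inner_neg_right, neg_sub]
  rw [hstep, real_inner_smul_right, norm_smul, Real.norm_of_nonneg hη, hflip] at hsmooth
  have hsq : L / 2 * (η * ‖u - x‖) ^ 2 ≤ L / 2 * (η * D) ^ 2 := by gcongr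
  linarith

theorem frankWolfe_step_le {C : Set H} {D : ℝ} (hCne : C.Nonempty)
    (hdiam : ∀ a ∈ C, ∀ b ∈ C, ‖a - b‖ ≤ D) {F : H → ℝ} {F' : H → H} {L η : ℝ} (hL : 0 ≤ L)
    (hsmooth : ∀ x y : H, F y ≤ F x + ⟪F' x, y - x⟫ + L / 2 * ‖y - x‖ ^ 2) (hη : 0 ≤ η)
    {x u ĝ : H} (hx : x ∈ C) (hu : u ∈ C) (hmin : ∀ v ∈ C, ⟪u, ĝ⟫ ≤ ⟪v, ĝ⟫) :
    η * frankWolfeGap C F' x + F ((1 - η) • x + η • u) ≤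
      F x + L * η ^ 2 * D ^ 2 / 2 + η * D * ‖ĝ - F' x‖ := by
  have hgap := mul_le_mul_of_nonneg_left (frankWolfeGap_le hCne hdiam hu hmin F' x) hη
  have hdesc := le_of_smooth_convex_comb hL hη (hsmooth _ _) (hdiam u hu x hx)
  linarith

theorem frankWolfe_iterate_mem {C : Set H} (hCconv : Convex ℝ C) {η : ℝ}
    (hη : η ∈ Set.Icc (0 : ℝ) 1) {x u : ℕ → H} (hx1 : x 1 ∈ C) (hu_mem : ∀ t, 1 ≤ t → u t ∈ C)
    (hxrec : ∀ t, 1 ≤ t → x (t + 1) = (1 - η) • x t + η • u t) :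
    ∀ t, 1 ≤ t → x t ∈ C := by
  refine Nat.le_induction hx1 fun t ht hxt => ?_
  rw [hxrec t ht]
  exact hCconv hxt (hu_mem t ht) (by linarith [hη.2]) hη.1 (by ring)

end FrankWolfe

section StochasticFrankWolfe

variable {H : Type*} [NormedAddCommGroup H] [InnerProductSpace ℝ H] {F' : H → H} {γ β : ℝ}
  {gbar x g ghat Z ζ : ℕ → H}

theorem norm_momentum_sub_grad_le (hγ0 : 0 ≤ γ) (hγ1 : γ ≤ 1) (hx01 : x 0 = x 1)
    (hg0 : g 0 = 0) (hg : ∀ t, 1 ≤ t → g t = (1 - γ) • g (t - 1) + γ • gbar t)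
    (hZ : ∀ s, 1 ≤ s → Z s = F' (x (s - 1)) - F' (x s))
    (hζ : ∀ s, 1 ≤ s → ζ s = gbar s - F' (x s)) (t : ℕ) :
    ‖g t - F' (x t)‖ ≤ (1 - γ) ^ t * ‖F' (x 1)‖ +
      ((1 - γ) * ‖∑ s ∈ Icc 1 t, (1 - γ) ^ (t - s) • Z s‖
        + γ * ‖∑ s ∈ Icc 1 t, (1 - γ) ^ (t - s) • ζ s‖) := by
  have hrec : ∀ t, g (t + 1) - F' (x (t + 1)) =
      (1 - γ) • (g t - F' (x t)) + ((1 - γ) • Z (t + 1) + γ • ζ (t + 1)) := by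
    intro t
    rw [hg (t + 1) (by omega), hZ (t + 1) (by omega), hζ (t + 1) (by omega), Nat.add_sub_cancel]
    module
  have hclosed := eq_pow_smul_add_sum_of_recurrence (e := fun t => g t - F' (x t))
    (w := fun s => (1 - γ) • Z s + γ • ζ s) hrec t
  rw [hclosed, hg0, hx01, zero_sub]
  simp only [smul_add, sum_add_distrib, smul_comm _ (1 - γ), smul_comm _ γ, ← smul_sum, ← add_assoc]
  refine norm_add₃_le.trans_eq ?_
  rw [norm_smul, norm_smul, norm_smul, norm_neg, Real.norm_of_nonneg (sub_nonneg.2 hγ1),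
    Real.norm_of_nonneg hγ0, Real.norm_of_nonneg (pow_nonneg (sub_nonneg.2 hγ1) t), add_assoc]

theorem sum_norm_direction_sub_grad_le (hγ : γ ∈ Set.Ioo (0 : ℝ) 1) (hβ : 0 ≤ β)
    (hβγ : β ≤ 1 - γ) (hx01 : x 0 = x 1) (hg0 : g 0 = 0)
    (hg : ∀ t, 1 ≤ t → g t = (1 - γ) • g (t - 1) + γ • gbar t)
    (hghat : ∀ t, 1 ≤ t → ghat t = (β / (1 - γ)) • g t + (1 - β / (1 - γ)) • gbar t)
    (hZ : ∀ s, 1 ≤ s → Z s = F' (x (s - 1)) - F' (x s))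
    (hζ : ∀ s, 1 ≤ s → ζ s = gbar s - F' (x s)) (τ : ℕ) :
    ∑ t ∈ Icc 1 τ, ‖ghat t - F' (x t)‖ ≤ β / γ * ‖F' (x 1)‖
      + β / (1 - γ) * ∑ t ∈ Icc 1 τ,
          ((1 - γ) * ‖∑ s ∈ Icc 1 t, (1 - γ) ^ (t - s) • Z s‖
            + γ * ‖∑ s ∈ Icc 1 t, (1 - γ) ^ (t - s) • ζ s‖)
      + (1 - β / (1 - γ)) * ∑ t ∈ Icc 1 τ, ‖ζ t‖ := by
  obtain ⟨hγ0, hγ1⟩ := hγ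
  set θ := β / (1 - γ) with hθ
  have hθ0 : 0 ≤ θ := div_nonneg hβ (by linarith)
  have hθ1 : θ ≤ 1 := (div_le_one (by linarith)).2 hβγ
  have hterm : ∀ t, 1 ≤ t → ‖ghat t - F' (x t)‖ ≤ (1 - γ) ^ t * (θ * ‖F' (x 1)‖) +
      (θ * ((1 - γ) * ‖∑ s ∈ Icc 1 t, (1 - γ) ^ (t - s) • Z s‖
        + γ * ‖∑ s ∈ Icc 1 t, (1 - γ) ^ (t - s) • ζ s‖) + (1 - θ) * ‖ζ t‖) := by
    intro t ht
    have hconv := norm_convex_comb_sub_le hθ0 hθ1 (g t) (gbar t) (F' (x t))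
    rw [← hghat t ht, ← hζ t ht] at hconv
    have hmom := mul_le_mul_of_nonneg_left
      (norm_momentum_sub_grad_le hγ0.le hγ1.le hx01 hg0 hg hZ hζ t) hθ0
    linarith
  refine (sum_Icc_le_of_le_pow_mul_add (by linarith) (by linarith) (by positivity) hterm τ).trans_eq
    ?_
  rw [sum_add_distrib, ← mul_sum, ← mul_sum, sub_sub_cancel, hθ]
  field_simp
  ring

end StochasticFrankWolfe

theorem sfw_tail_gap_inequality_general
    {H : Type*} [NormedAddCommGroup H] [InnerProductSpace ℝ H]
    (C : Set H) (hCne : C.Nonempty) (hCconv : Convex ℝ C) (D : ℝ)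
    (hdiam : ∀ a ∈ C, ∀ b ∈ C, ‖a - b‖ ≤ D)
    (F : H → ℝ) (F' : H → H) (L : ℝ) (hL : 0 ≤ L)
    (hsmooth : ∀ x y : H, F y ≤ F x + ⟪F' x, y - x⟫ + L / 2 * ‖y - x‖ ^ 2)
    (γ β η : ℝ) (hγ : γ ∈ Set.Ioo (0 : ℝ) 1) (hβ : 0 ≤ β) (hβγ : β ≤ 1 - γ)
    (hη : η ∈ Set.Icc (0 : ℝ) 1)
    (gbar : ℕ → H)
    (x : ℕ → H) (hx1 : x 1 ∈ C) (hx01 : x 0 = x 1)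
    (g ghat u : ℕ → H)
    (hg0 : g 0 = 0)
    (hg : ∀ t, 1 ≤ t → g t = (1 - γ) • g (t - 1) + γ • gbar t)
    (hghat : ∀ t, 1 ≤ t →
      ghat t = (β / (1 - γ)) • g t + (1 - β / (1 - γ)) • gbar t)
    (hu_mem : ∀ t, 1 ≤ t → u t ∈ C)
    (hu_min : ∀ t, 1 ≤ t → ∀ v ∈ C, ⟪u t, ghat t⟫ ≤ ⟪v, ghat t⟫)
    (hxrec : ∀ t, 1 ≤ t → x (t + 1) = (1 - η) • x t + η • u t)
    (Z ζ : ℕ → H)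
    (hZ : ∀ s, 1 ≤ s → Z s = F' (x (s - 1)) - F' (x s))
    (hζ : ∀ s, 1 ≤ s → ζ s = gbar s - F' (x s)) :
    ∀ τ : ℕ, 1 ≤ τ →
      η * (∑ t ∈ Finset.Icc 1 τ,
          sSup ((fun v => ⟪v - x t, -F' (x t)⟫) '' C)) + F (x (τ + 1)) ≤
        F (x 1) + L * τ * η ^ 2 * D ^ 2 / 2
          + (η * D * β / γ) * ‖F' (x 1)‖
          + (η * D * β / (1 - γ)) * ∑ t ∈ Finset.Icc 1 τ,
              ((1 - γ) * ‖∑ s ∈ Finset.Icc 1 t, (1 - γ) ^ (t - s) • Z s‖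
                + γ * ‖∑ s ∈ Finset.Icc 1 t, (1 - γ) ^ (t - s) • ζ s‖)
          + η * D * (1 - β / (1 - γ)) * ∑ t ∈ Finset.Icc 1 τ, ‖ζ t‖ := by
  intro τ _
  have hD : 0 ≤ D := (norm_nonneg _).trans (hdiam _ hCne.some_mem _ hCne.some_mem)
  have hxC := frankWolfe_iterate_mem hCconv hη hx1 hu_mem hxrec
  have hdesc := sum_Icc_add_le_of_forall_add_le (f := fun t => F (x t))
    (a := fun t => η * frankWolfeGap C F' (x t))
    (b := fun t => L * η ^ 2 * D ^ 2 / 2 + η * D * ‖ghat t - F' (x t)‖)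
    (fun t ht => by
      simpa only [hxrec t ht, add_assoc] using
        frankWolfe_step_le hCne hdiam hL hsmooth hη.1 (hxC t ht) (hu_mem t ht) (hu_min t ht)) τ
  simp only [sum_add_distrib, sum_const, Nat.card_Icc, Nat.add_sub_cancel, nsmul_eq_mul,
    ← mul_sum] at hdesc
  have herr := mul_le_mul_of_nonneg_left
    (sum_norm_direction_sub_grad_le hγ hβ hβγ hx01 hg0 hg hghat hZ hζ τ) (mul_nonneg hη.1 hD)
  linear_combination hdesc + herr

/-- Deterministic master inequality (Lemma C.5, Tail-Gap) for stochastic Frank–Wolfe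
with constant step size `η` and momentum parameters `γ`, `β`, applied to arbitrary
realized stochastic gradients `ḡ_t`. -/
theorem sfw_tail_gap_inequality
    {H : Type*} [NormedAddCommGroup H] [InnerProductSpace ℝ H]
    (C : Set H) (hCne : C.Nonempty) (hCconv : Convex ℝ C) (D : ℝ)
    (hdiam : ∀ a ∈ C, ∀ b ∈ C, ‖a - b‖ ≤ D)
    (F : H → ℝ) (F' : H → H) (L : ℝ) (hL : 0 ≤ L)
    (hdiff : ∀ z : H, HasFDerivAt F (innerSL ℝ (F' z)) z)
    (hsmooth : ∀ x y : H, F y ≤ F x + ⟪F' x, y - x⟫ + L / 2 * ‖y - x‖ ^ 2)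
    (γ β η : ℝ) (hγ : γ ∈ Set.Ioo (0 : ℝ) 1) (hβ : 0 ≤ β) (hβγ : β ≤ 1 - γ)
    (hη : η ∈ Set.Icc (0 : ℝ) 1)
    (gbar : ℕ → H)
    (x : ℕ → H) (hx1 : x 1 ∈ C) (hx01 : x 0 = x 1)
    (g ghat u : ℕ → H)
    (hg0 : g 0 = 0)
    (hg : ∀ t, 1 ≤ t → g t = (1 - γ) • g (t - 1) + γ • gbar t)
    (hghat : ∀ t, 1 ≤ t →
      ghat t = (β / (1 - γ)) • g t + (1 - β / (1 - γ)) • gbar t)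
    (hu_mem : ∀ t, 1 ≤ t → u t ∈ C)
    (hu_min : ∀ t, 1 ≤ t → ∀ v ∈ C, ⟪u t, ghat t⟫ ≤ ⟪v, ghat t⟫)
    (hxrec : ∀ t, 1 ≤ t → x (t + 1) = (1 - η) • x t + η • u t)
    (Z ζ : ℕ → H)
    (hZ : ∀ s, 1 ≤ s → Z s = F' (x (s - 1)) - F' (x s))
    (hζ : ∀ s, 1 ≤ s → ζ s = gbar s - F' (x s)) :
    ∀ τ : ℕ, 1 ≤ τ →
      η * (∑ t ∈ Finset.Icc 1 τ,
          sSup ((fun v => ⟪v - x t, -F' (x t)⟫) '' C)) + F (x (τ + 1)) ≤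
        F (x 1) + L * τ * η ^ 2 * D ^ 2 / 2
          + (η * D * β / γ) * ‖F' (x 1)‖
          + (η * D * β / (1 - γ)) * ∑ t ∈ Finset.Icc 1 τ,
              ((1 - γ) * ‖∑ s ∈ Finset.Icc 1 t, (1 - γ) ^ (t - s) • Z s‖
                + γ * ‖∑ s ∈ Finset.Icc 1 t, (1 - γ) ^ (t - s) • ζ s‖)
          + η * D * (1 - β / (1 - γ)) * ∑ t ∈ Finset.Icc 1 τ, ‖ζ t‖ :=
  sfw_tail_gap_inequality_general C hCne hCconv D hdiam F F' L hL hsmooth γ β η hγ hβ hβγ hη gbar x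
    hx1 hx01 g ghat u hg0 hg hghat hu_mem hu_min hxrec Z ζ hZ hζ
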